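/- arXiv:1004.0160 — 2 statements merged into one kernel-verified Lean document; each statement's English description precedes it below -/
import Mathlib

section
/- Let V be a commutative, integral (k = ⊤), completely distributive quantale. Then the map ξ : U(V) → V from ultrafilters on V to V given by ξ(𝔵) = ⋀_{A ∈ 𝔵} ⋁ A is monotone with respect to the order on ultrafilters induced by 𝔵 ≤ 𝔶 iff every upward-closed set in 𝔵 is in 𝔶, and satisfies ξ(ė(v)) = v for the principal ultrafilter ė(v) at v. -/
/-! Complete distributivity writes `ξ 𝔵` as the join of the `u` totally below it. For such `u`
the upper set `↑u` lies in `𝔵`: otherwise its complement does, so `ξ 𝔵 ≤ ⋁ (↑u)ᶜ`, and total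
belowness would put `u` below an element outside `↑u`. Hence `↑u ∈ 𝔶`, which meets every
`B ∈ 𝔶`, giving `u ≤ ⋁ B`. -/

/-- `ξ(𝔵) = ⋀_{A ∈ 𝔵} ⋁ A` for an ultrafilter `𝔵` on a complete lattice. -/
noncomputable def xi {V : Type u} [CompleteLattice V] (𝔵 : Ultrafilter V) : V :=
  ⨅ A ∈ 𝔵, sSup A

/-- `u` is totally below `w`. -/
def TotallyBelow {V : Type u} [CompleteLattice V] (u w : V) : Prop :=
  ∀ S : Set V, w ≤ sSup S → ∃ s ∈ S, u ≤ s

section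

variable {V : Type u} [CompleteLattice V]

theorem xi_pure (v : V) : xi (pure v : Ultrafilter V) = v :=
  le_antisymm
    ((biInf_le sSup (Ultrafilter.mem_pure.2 rfl : ({v} : Set V) ∈ _)).trans_eq sSup_singleton)
    (le_iInf₂ fun _ hA => le_sSup hA)

theorem Ici_mem_of_totallyBelow_xi {𝔵 : Ultrafilter V} {u : V} (hu : TotallyBelow u (xi 𝔵)) :
    Set.Ici u ∈ 𝔵 := by
  by_contra hnot
  have hcompl : (Set.Ici u)ᶜ ∈ 𝔵 := Ultrafilter.compl_mem_iff_notMem.2 hnot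
  obtain ⟨s, hs, hus⟩ := hu _ (biInf_le sSup hcompl)
  exact hs hus

theorem xi_le_xi_of_upperSet_mem {𝔵 𝔶 : Ultrafilter V}
    (hcd : xi 𝔵 = sSup {u | TotallyBelow u (xi 𝔵)})
    (h : ∀ A ∈ 𝔵, IsUpperSet A → A ∈ 𝔶) : xi 𝔵 ≤ xi 𝔶 := by
  refine le_iInf₂ fun B hB => ?_
  rw [hcd]
  refine sSup_le fun u hu => ?_
  have hIci : Set.Ici u ∈ 𝔶 := h _ (Ici_mem_of_totallyBelow_xi hu) (isUpperSet_Ici u)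
  obtain ⟨w, huw, hwB⟩ := Ultrafilter.nonempty_of_mem (Filter.inter_mem hIci hB)
  exact huw.trans (le_sSup hwB)

end

theorem stmt15_general {V : Type u} [CompleteLattice V]
    (hcd : ∀ w : V, w = sSup {u | TotallyBelow u w}) :
    (∀ 𝔵 𝔶 : Ultrafilter V, (∀ A ∈ 𝔵, IsUpperSet A → A ∈ 𝔶) → xi 𝔵 ≤ xi 𝔶) ∧
    (∀ v : V, xi (pure v : Ultrafilter V) = v) :=
  ⟨fun _ _ => xi_le_xi_of_upperSet_mem (hcd _), xi_pure⟩

/-- For a commutative, integral (`k = ⊤`), completely distributive quantale `V`, the map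
`ξ : U(V) → V`, `ξ(𝔵) = ⋀_{A ∈ 𝔵} ⋁ A`, is monotone for the order `𝔵 ≤ 𝔶` iff every
upward-closed set in `𝔵` is in `𝔶`, and `ξ(ė(v)) = v` for principal ultrafilters. -/
theorem stmt15 {V : Type u} [CompleteLattice V] [CommMonoid V]
    (hd : ∀ (x : V) (S : Set V), x * sSup S = ⨆ s ∈ S, x * s)
    (hk : (1 : V) = ⊤)
    (hcd : ∀ w : V, w = sSup {u | TotallyBelow u w}) :
    (∀ 𝔵 𝔶 : Ultrafilter V, (∀ A ∈ 𝔵, IsUpperSet A → A ∈ 𝔶) → xi 𝔵 ≤ xi 𝔶) ∧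
    (∀ v : V, xi (pure v : Ultrafilter V) = v) :=
  stmt15_general hcd
end

section
/- Let X be a topological space and φ : X → 2 the characteristic map of the complement of a subset, so that φ corresponds to a closed subset A ⊆ X viewed as a distributor X ⇸ E to the one-point space. Then φ is a right adjoint distributor if and only if A is a nonempty irreducible closed subset; and φ = x^* (the distributor represented by a point x) if and only if A is the closure of {x}. Consequently, every such right adjoint is representable by a point iff X is (weakly) sober. -/
/-!
A right adjoint `ψ` of the distributor of `A` yields an ultrafilter `𝔵 ∋ A` converging to every
point of `A`: take a witness `𝔵` of `id_E ≤ φ ∘ ψ` and evaluate `ψ ∘ φ ≤ a` at its principal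
ultrafilter. Conversely, given such an ultrafilter, "`𝔶` converges to every point of `A`" is a right
adjoint `ψ`. Such an ultrafilter exists exactly when `A` is irreducible: it has to contain `A ∩ U`
for every open `U` meeting `A`, and irreducibility is precisely what makes these sets directed.
-/

open Filter Topology

variable {X : Type u} [TopologicalSpace X]

/-- The lax extension of the ultrafilter functor (for `V = 2`) applied to the convergence
matrix of a topological space. -/
def UextConv (𝔛 : Ultrafilter (Ultrafilter X)) (𝔵 : Ultrafilter X) : Prop :=
  ∃ 𝔴 : Ultrafilter (Ultrafilter X × X),
    𝔴.map Prod.fst = 𝔛 ∧ 𝔴.map Prod.snd = 𝔵 ∧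
    {p : Ultrafilter X × X | ↑p.1 ≤ 𝓝 p.2} ∈ 𝔴

/-- `ψ : E ⇸ X` is a distributor: `a ∘ ψ ≤ ψ` for the Kleisli convolution. -/
def PsiDistrib (ψ : Ultrafilter X → Prop) : Prop :=
  ∀ 𝔛 : Ultrafilter (Ultrafilter X),
    (∃ 𝔶, UextConv 𝔛 𝔶 ∧ ψ 𝔶) → ψ (𝔛.bind id)

/-- The distributor `X ⇸ E` given by the (closed) set `A` is a right adjoint: there is a
distributor `ψ : E ⇸ X` with `id_E ≤ φ ∘ ψ` and `ψ ∘ φ ≤ a` (Kleisli convolution). -/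
def IsRightAdjointDistrib (A : Set X) : Prop :=
  ∃ ψ : Ultrafilter X → Prop,
    PsiDistrib ψ ∧
    (∃ 𝔵 : Ultrafilter X, ψ 𝔵 ∧ A ∈ 𝔵) ∧
    (∀ (𝔛 : Ultrafilter (Ultrafilter X)) (x : X),
      {𝔶 : Ultrafilter X | ψ 𝔶} ∈ 𝔛 → x ∈ A → ↑(𝔛.bind id) ≤ 𝓝 x)

lemma isIrreducible_iff_nonempty_and_isClosed_union {A : Set X} :
    IsIrreducible A ↔
      A.Nonempty ∧ ∀ B C : Set X, IsClosed B → IsClosed C → A ⊆ B ∪ C → A ⊆ B ∨ A ⊆ C :=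
  and_congr_right' isPreirreducible_iff_isClosed_union_isClosed

lemma Ultrafilter.bind_id_le_nhds {𝔛 : Ultrafilter (Ultrafilter X)} {x : X}
    (h : ∀ U : Set X, IsOpen U → x ∈ U → {𝔷 : Ultrafilter X | U ∈ 𝔷} ∈ 𝔛) :
    ↑(𝔛.bind id) ≤ 𝓝 x :=
  (nhds_basis_opens x).ge_iff.mpr fun U ⟨hxU, hU⟩ => h U hU hxU

/-- Convergence is transitive along the lax extension of the ultrafilter monad. -/
lemma UextConv.bind_id_le_nhds {𝔛 : Ultrafilter (Ultrafilter X)} {𝔶 : Ultrafilter X} {x : X}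
    (h𝔛 : UextConv 𝔛 𝔶) (h𝔶 : ↑𝔶 ≤ 𝓝 x) : ↑(𝔛.bind id) ≤ 𝓝 x := by
  obtain ⟨𝔴, hfst, hsnd, hconv⟩ := h𝔛
  refine Ultrafilter.bind_id_le_nhds fun U hU hxU => ?_
  have hsndU : {p : Ultrafilter X × X | p.2 ∈ U} ∈ 𝔴 := by
    rw [← hsnd] at h𝔶
    exact h𝔶 (hU.mem_nhds hxU)
  have hfstU : {p : Ultrafilter X × X | U ∈ p.1} ∈ 𝔴 := by
    filter_upwards [hsndU, hconv] with p hpU hple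
    exact hple (hU.mem_nhds hpU)
  rw [← hfst]
  exact hfstU

lemma isRightAdjointDistrib_iff_exists_ultrafilter {A : Set X} :
    IsRightAdjointDistrib A ↔ ∃ 𝔵 : Ultrafilter X, A ∈ 𝔵 ∧ ∀ x ∈ A, ↑𝔵 ≤ 𝓝 x := by
  constructor
  · rintro ⟨ψ, -, ⟨𝔵, hψ𝔵, hA𝔵⟩, hconv⟩
    refine ⟨𝔵, hA𝔵, fun x hxA => ?_⟩
    have hbind : (pure 𝔵 : Ultrafilter (Ultrafilter X)).bind id = 𝔵 := pure_bind 𝔵 id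
    simpa only [hbind] using hconv (pure 𝔵) x hψ𝔵 hxA
  · rintro ⟨𝔵, hA𝔵, h𝔵⟩
    refine ⟨fun 𝔶 => ∀ x ∈ A, ↑𝔶 ≤ 𝓝 x, ?_, ⟨𝔵, h𝔵, hA𝔵⟩, ?_⟩
    · rintro 𝔛 ⟨𝔶, h𝔛𝔶, h𝔶⟩ x hxA
      exact h𝔛𝔶.bind_id_le_nhds (h𝔶 x hxA)
    · intro 𝔛 x h𝔛 hxA
      refine Ultrafilter.bind_id_le_nhds fun U hU hxU => ?_
      filter_upwards [h𝔛] with 𝔶 h𝔶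
      exact h𝔶 x hxA (hU.mem_nhds hxU)

lemma isIrreducible_of_ultrafilter_le_nhds {A : Set X} {𝔵 : Ultrafilter X} (hA𝔵 : A ∈ 𝔵)
    (h𝔵 : ∀ x ∈ A, ↑𝔵 ≤ 𝓝 x) : IsIrreducible A := by
  have mem_of_inter_nonempty {U : Set X} (hU : IsOpen U) : (A ∩ U).Nonempty → U ∈ 𝔵 :=
    fun ⟨x, hxA, hxU⟩ => h𝔵 x hxA (hU.mem_nhds hxU)
  refine ⟨𝔵.nonempty_of_mem hA𝔵, fun U V hU hV hAU hAV => ?_⟩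
  exact 𝔵.nonempty_of_mem <|
    inter_mem hA𝔵 (inter_mem (mem_of_inter_nonempty hU hAU) (mem_of_inter_nonempty hV hAV))

lemma IsIrreducible.exists_ultrafilter_le_nhds {A : Set X} (hA : IsIrreducible A) :
    ∃ 𝔵 : Ultrafilter X, A ∈ 𝔵 ∧ ∀ x ∈ A, ↑𝔵 ≤ 𝓝 x := by
  let ι := {U : Set X // IsOpen U ∧ (A ∩ U).Nonempty}
  let univ' : ι := ⟨Set.univ, isOpen_univ, by simpa using hA.nonempty⟩
  have : Nonempty ι := ⟨univ'⟩
  let F : Filter X := ⨅ U : ι, 𝓟 (A ∩ U.1)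
  have hdir : Directed (· ≥ ·) fun U : ι => 𝓟 (A ∩ U.1) := by
    rintro ⟨U, hU, hAU⟩ ⟨V, hV, hAV⟩
    refine ⟨⟨U ∩ V, hU.inter hV, hA.2 U V hU hV hAU hAV⟩, ?_, ?_⟩ <;>
      exact principal_mono.mpr (Set.inter_subset_inter_right A (by simp))
  have hF : F.NeBot := iInf_neBot_of_directed' hdir fun U => principal_neBot_iff.mpr U.2.2
  obtain ⟨𝔵, h𝔵F⟩ := exists_ultrafilter_le F
  have mem_of_open (U : ι) : A ∩ U.1 ∈ 𝔵 := h𝔵F (mem_iInf_of_mem U (mem_principal_self _))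
  refine ⟨𝔵, mem_of_superset (mem_of_open univ') Set.inter_subset_left, fun x hxA => ?_⟩
  refine (nhds_basis_opens x).ge_iff.mpr fun U ⟨hxU, hU⟩ => ?_
  exact mem_of_superset (mem_of_open ⟨U, hU, x, hxA, hxU⟩) Set.inter_subset_right

lemma isRightAdjointDistrib_iff_isIrreducible {A : Set X} :
    IsRightAdjointDistrib A ↔ IsIrreducible A := by
  rw [isRightAdjointDistrib_iff_exists_ultrafilter]
  exact ⟨fun ⟨_, hA𝔵, h𝔵⟩ => isIrreducible_of_ultrafilter_le_nhds hA𝔵 h𝔵,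
    IsIrreducible.exists_ultrafilter_le_nhds⟩

theorem stmt18_general (A : Set X) :
    (IsRightAdjointDistrib A ↔
      (A.Nonempty ∧ ∀ B C : Set X, IsClosed B → IsClosed C → A ⊆ B ∪ C → A ⊆ B ∨ A ⊆ C)) ∧
    (∀ x : X, ((fun x' => x' ∈ A) = fun x' => x' ∈ closure ({x} : Set X)) ↔
      A = closure ({x} : Set X)) ∧
    ((∀ A' : Set X, IsClosed A' → A'.Nonempty →
        (∀ B C : Set X, IsClosed B → IsClosed C → A' ⊆ B ∪ C → A' ⊆ B ∨ A' ⊆ C) →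
        ∃ x : X, A' = closure ({x} : Set X)) ↔
      (∀ A' : Set X, IsClosed A' → IsRightAdjointDistrib A' →
        ∃ x : X, A' = closure ({x} : Set X))) := by
  have key (A' : Set X) := isRightAdjointDistrib_iff_isIrreducible.trans
    (isIrreducible_iff_nonempty_and_isClosed_union (A := A'))
  -- `Set X` is `X → Prop`, so the two sides of the middle conjunct are the same proposition.
  refine ⟨key A, fun x => Iff.rfl, ?_⟩
  simp only [key, and_imp]

/-- A distributor `φ : X ⇸ E`, i.e. a closed set `A`, is right adjoint iff `A` is nonempty
and irreducible; `φ = x^*` iff `A = closure {x}`; consequently every right adjoint is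
representable by a point iff `X` is weakly sober. -/
theorem stmt18 (A : Set X) (hA : IsClosed A) :
    (IsRightAdjointDistrib A ↔
      (A.Nonempty ∧ ∀ B C : Set X, IsClosed B → IsClosed C → A ⊆ B ∪ C → A ⊆ B ∨ A ⊆ C)) ∧
    (∀ x : X, ((fun x' => x' ∈ A) = fun x' => x' ∈ closure ({x} : Set X)) ↔
      A = closure ({x} : Set X)) ∧
    ((∀ A' : Set X, IsClosed A' → A'.Nonempty →
        (∀ B C : Set X, IsClosed B → IsClosed C → A' ⊆ B ∪ C → A' ⊆ B ∨ A' ⊆ C) →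
        ∃ x : X, A' = closure ({x} : Set X)) ↔
      (∀ A' : Set X, IsClosed A' → IsRightAdjointDistrib A' →
        ∃ x : X, A' = closure ({x} : Set X))) :=
  stmt18_general A
end
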